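/- For every weighted finite graph G and each natural number 1 ≤ k ≤ N, h̄(k) ≥ (1/2)·(1 − h(k)). -/
import Mathlib


open Finset

namespace DualCheeger

variable {N : ℕ}

/-- The degree of a vertex `u`: `d_u = ∑_v w u v`. -/
def degree (w : Fin N → Fin N → ℝ) (u : Fin N) : ℝ := ∑ v, w u v

/-- A weighted finite graph structure on `Fin N`: symmetric nonnegative weights,
no self-loops, and strictly positive degrees. -/
def IsWeightedGraph (w : Fin N → Fin N → ℝ) : Prop :=
  (∀ u v, w u v = w v u) ∧ (∀ u v, 0 ≤ w u v) ∧ (∀ u, w u u = 0) ∧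
    ∀ u, 0 < degree w u

/-- `|E(A,B)| = ∑_{u ∈ A} ∑_{v ∈ B} w u v`. -/
def Ew (w : Fin N → Fin N → ℝ) (A B : Finset (Fin N)) : ℝ :=
  ∑ u ∈ A, ∑ v ∈ B, w u v

/-- `vol(A) = ∑_{u ∈ A} d_u`. -/
def vol (w : Fin N → Fin N → ℝ) (A : Finset (Fin N)) : ℝ := ∑ u ∈ A, degree w u

/-- The expansion `φ(S) = |E(S, Sᶜ)| / vol(S)`. -/
noncomputable def expansion (w : Fin N → Fin N → ℝ) (S : Finset (Fin N)) : ℝ :=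
  Ew w S Sᶜ / vol w S

/-- `φ̄(V₁,V₂) = 2|E(V₁,V₂)| / vol(V₁ ∪ V₂)`. -/
noncomputable def phibar (w : Fin N → Fin N → ℝ) (V₁ V₂ : Finset (Fin N)) : ℝ :=
  2 * Ew w V₁ V₂ / vol w (V₁ ∪ V₂)

/-- A `k`-subpartition: `k` nonempty pairwise disjoint subsets. -/
def IsSubpartition (k : ℕ) (P : Fin k → Finset (Fin N)) : Prop :=
  (∀ i, (P i).Nonempty) ∧ ∀ i j, i ≠ j → Disjoint (P i) (P j)

/-- The `k`-way Cheeger constant `h(k)`. -/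
noncomputable def cheeger (w : Fin N → Fin N → ℝ) (k : ℕ) : ℝ :=
  sInf { x | ∃ P : Fin k → Finset (Fin N), IsSubpartition k P ∧
    x = ⨆ i, expansion w (P i) }

/-- A `k`-sub-bipartition: `k` pairs of subsets, all `2k` subsets pairwise
disjoint, with each union `V_{2i-1} ∪ V_{2i}` nonempty. -/
def IsSubBipartition (k : ℕ) (P : Fin k → Finset (Fin N) × Finset (Fin N)) : Prop :=
  (∀ i, Disjoint (P i).1 (P i).2) ∧
    (∀ i j, i ≠ j → Disjoint ((P i).1 ∪ (P i).2) ((P j).1 ∪ (P j).2)) ∧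
    ∀ i, ((P i).1 ∪ (P i).2).Nonempty

/-- The `k`-way dual Cheeger constant `h̄(k)`. -/
noncomputable def dualCheeger (w : Fin N → Fin N → ℝ) (k : ℕ) : ℝ :=
  sSup { x | ∃ P : Fin k → Finset (Fin N) × Finset (Fin N), IsSubBipartition k P ∧
    x = ⨅ i, phibar w (P i).1 (P i).2 }

/-- `lam` enumerates the eigenvalues of the normalized Laplacian
`Δ f (u) = f u - d_u⁻¹ ∑_v w u v * f v` in nondecreasing order with multiplicity,
witnessed by a `μ`-orthonormal eigenbasis `f`. -/
def IsLapEigenbasis (w : Fin N → Fin N → ℝ) (lam : Fin N → ℝ)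
    (f : Fin N → Fin N → ℝ) : Prop :=
  Monotone lam ∧
    (∀ i j, (∑ u, degree w u * f i u * f j u) = if i = j then (1 : ℝ) else 0) ∧
    ∀ i u, f i u - (degree w u)⁻¹ * ∑ v, w u v * f i v = lam i * f i u

/-- The dual Rayleigh quotient of a function `f : V → ℝ`. -/
noncomputable def dualRayleigh (w : Fin N → Fin N → ℝ) (f : Fin N → ℝ) : ℝ :=
  (1 / 2 * ∑ u, ∑ v, w u v * (f u + f v) ^ 2) / ∑ u, degree w u * f u ^ 2

/-- The dual Rayleigh quotient of a map `F : V → ℝ^k`. -/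
noncomputable def dualRayleighVec (w : Fin N → Fin N → ℝ) {k : ℕ}
    (F : Fin N → EuclideanSpace ℝ (Fin k)) : ℝ :=
  (1 / 2 * ∑ u, ∑ v, w u v * ‖F u + F v‖ ^ 2) / ∑ u, degree w u * ‖F u‖ ^ 2

/-- The rough projective-space distance `d̄_F` between (the projections of)
`F u` and `F v`. -/
noncomputable def dbar {k : ℕ} (F : Fin N → EuclideanSpace ℝ (Fin k))
    (u v : Fin N) : ℝ :=
  min ‖‖F u‖⁻¹ • F u - ‖F v‖⁻¹ • F v‖ ‖‖F u‖⁻¹ • F u + ‖F v‖⁻¹ • F v‖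

/-- The `l²` mass of `F` on `S`: `ℰ_S = ∑_{u ∈ S} d_u ‖F u‖²`. -/
noncomputable def mass (w : Fin N → Fin N → ℝ) {k : ℕ}
    (F : Fin N → EuclideanSpace ℝ (Fin k)) (S : Finset (Fin N)) : ℝ :=
  ∑ u ∈ S, degree w u * ‖F u‖ ^ 2

/-- The distance `d̄_F(v, T)` from a vertex to a set. -/
noncomputable def dbarSet {k : ℕ} (F : Fin N → EuclideanSpace ℝ (Fin k))
    (v : Fin N) (T : Set (Fin N)) : ℝ :=
  sInf { x | ∃ t ∈ T, x = dbar F v t }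

/-- The modified dual Cheeger constant `h̄*(k)`. -/
noncomputable def dualCheegerStar (w : Fin N → Fin N → ℝ) (k : ℕ) : ℝ :=
  sSup { x | ∃ P : Fin k → Finset (Fin N) × Finset (Fin N), IsSubBipartition k P ∧
    x = ⨅ i, (2 * Ew w (P i).1 (P i).2 + 1 / 2 * Ew w ((P i).1 ∪ (P i).2)
        (Finset.univ \ Finset.univ.biUnion (fun j => (P j).1 ∪ (P j).2))) /
      vol w ((P i).1 ∪ (P i).2) }

/-- `G` is bipartite: `V = A ∪ Aᶜ` with no edges inside `A` nor inside `Aᶜ`. -/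
def IsBipartite (w : Fin N → Fin N → ℝ) : Prop :=
  ∃ A : Finset (Fin N), (∀ u ∈ A, ∀ v ∈ A, w u v = 0) ∧
    ∀ u ∈ Aᶜ, ∀ v ∈ Aᶜ, w u v = 0

/-- The equivalence relation generated by adjacency (connected components). -/
def Reach (w : Fin N → Fin N → ℝ) : Fin N → Fin N → Prop :=
  Relation.EqvGen fun u v => 0 < w u v

/-- `w` is the weight function of a weighted cycle on `Fin N`: symmetric,
nonnegative, and positive exactly on consecutive vertices mod `N`. -/
def IsCycleWeight (N : ℕ) (w : Fin N → Fin N → ℝ) : Prop :=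
  (∀ u v, w u v = w v u) ∧ (∀ u v, 0 ≤ w u v) ∧
    ∀ i j : Fin N, 0 < w i j ↔ ((i.val + 1) % N = j.val ∨ (j.val + 1) % N = i.val)

/-- The unweighted cycle on `Fin N`. -/
noncomputable def cycleWeight (N : ℕ) : Fin N → Fin N → ℝ := fun i j =>
  if (i.val + 1) % N = j.val ∨ (j.val + 1) % N = i.val then 1 else 0

variable {w : Fin N → Fin N → ℝ}

lemma Ew_nonneg (hpos : ∀ u v, 0 ≤ w u v) (A B : Finset (Fin N)) : 0 ≤ Ew w A B :=
  Finset.sum_nonneg fun _ _ => Finset.sum_nonneg fun _ _ => hpos _ _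

lemma Ew_symm (hsymm : ∀ u v, w u v = w v u) (A B : Finset (Fin N)) :
    Ew w A B = Ew w B A := by
  rw [Ew, Finset.sum_comm]
  simp only [Ew]
  exact Finset.sum_congr rfl fun u _ => Finset.sum_congr rfl fun v _ => hsymm _ _

lemma Ew_mono_right (hpos : ∀ u v, 0 ≤ w u v) {B B' : Finset (Fin N)}
    (h : B ⊆ B') (A : Finset (Fin N)) : Ew w A B ≤ Ew w A B' :=
  Finset.sum_le_sum fun u _ =>
    Finset.sum_le_sum_of_subset_of_nonneg h fun v _ _ => hpos u v

lemma Ew_union_left {A A' : Finset (Fin N)} (h : Disjoint A A') (B : Finset (Fin N)) :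
    Ew w (A ∪ A') B = Ew w A B + Ew w A' B :=
  Finset.sum_union h

lemma Ew_union_right {B B' : Finset (Fin N)} (h : Disjoint B B') (A : Finset (Fin N)) :
    Ew w A (B ∪ B') = Ew w A B + Ew w A B' := by
  simp only [Ew, Finset.sum_union h, Finset.sum_add_distrib]

lemma Ew_univ_right (A : Finset (Fin N)) : Ew w A univ = vol w A := rfl

lemma vol_pos (hd : ∀ u, 0 < degree w u) {A : Finset (Fin N)} (hA : A.Nonempty) :
    0 < vol w A :=
  Finset.sum_pos (fun u _ => hd u) hA

lemma Ew_insert_left {A : Finset (Fin N)} {u : Fin N} (hu : u ∉ A)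
    (B : Finset (Fin N)) : Ew w (insert u A) B = Ew w A B + ∑ v ∈ B, w u v := by
  rw [Ew, Finset.sum_insert hu, add_comm]; rfl

lemma Ew_insert_right {B : Finset (Fin N)} {u : Fin N} (hu : u ∉ B)
    (A : Finset (Fin N)) : Ew w A (insert u B) = Ew w A B + ∑ a ∈ A, w a u := by
  simp only [Ew, Finset.sum_insert hu, Finset.sum_add_distrib]
  ring

/-- Max-cut: every set can be split into two sides with cut at least a quarter
of the (ordered) internal edge weight. -/
lemma exists_maxcut (hsymm : ∀ u v, w u v = w v u) (hdiag : ∀ u, w u u = 0)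
    (S : Finset (Fin N)) :
    ∃ A B : Finset (Fin N), Disjoint A B ∧ A ∪ B = S ∧
      Ew w A A + Ew w B B ≤ 2 * Ew w A B := by
  classical
  induction S using Finset.induction_on with
  | empty => exact ⟨∅, ∅, disjoint_empty_left _, by simp, by simp [Ew]⟩
  | @insert u S' hu ih =>
    obtain ⟨A, B, hAB, hUn, hle⟩ := ih
    have huA : u ∉ A := fun h => hu (hUn ▸ Finset.mem_union_left _ h)
    have huB : u ∉ B := fun h => hu (hUn ▸ Finset.mem_union_right _ h)
    have hBA : (∑ v ∈ B, w u v) ≤ ∑ v ∈ A, w u v ∨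
        (∑ v ∈ A, w u v) ≤ ∑ v ∈ B, w u v := le_total _ _ |>.symm.imp id id
    rcases le_total (∑ v ∈ B, w u v) (∑ v ∈ A, w u v) with h | h
    · -- put u in B
      refine ⟨A, insert u B, ?_, ?_, ?_⟩
      · exact Finset.disjoint_insert_right.2 ⟨huA, hAB⟩
      · rw [Finset.union_insert, hUn]
      · have e1 : Ew w (insert u B) (insert u B)
            = Ew w B B + (∑ v ∈ B, w u v) + (∑ v ∈ B, w u v) := by
          rw [Ew_insert_right huB, Ew_insert_left huB, Finset.sum_insert huB,
            hdiag u]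
          have : ∑ a ∈ B, w a u = ∑ a ∈ B, w u a :=
            Finset.sum_congr rfl fun a _ => hsymm a u
          rw [this]; ring
        have e2 : Ew w A (insert u B) = Ew w A B + ∑ v ∈ A, w u v := by
          rw [Ew_insert_right huB]
          congr 1
          exact Finset.sum_congr rfl fun a _ => hsymm a u
        rw [e1, e2]; linarith
    · -- put u in A
      refine ⟨insert u A, B, ?_, ?_, ?_⟩
      · exact Finset.disjoint_insert_left.2 ⟨huB, hAB⟩
      · rw [Finset.insert_union, hUn]
      · have e1 : Ew w (insert u A) (insert u A)
            = Ew w A A + (∑ v ∈ A, w u v) + (∑ v ∈ A, w u v) := by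
          rw [Ew_insert_right huA, Ew_insert_left huA, Finset.sum_insert huA,
            hdiag u]
          have : ∑ a ∈ A, w a u = ∑ a ∈ A, w u a :=
            Finset.sum_congr rfl fun a _ => hsymm a u
          rw [this]; ring
        have e2 : Ew w (insert u A) B = Ew w A B + ∑ v ∈ B, w u v := by
          rw [Ew_insert_left huA]
        rw [e1, e2]; linarith

/-- Proposition 3.4: `h̄(k) ≥ (1/2)(1 - h(k))`. -/
theorem dualCheeger_ge_half_one_sub_cheeger {N : ℕ} (w : Fin N → Fin N → ℝ)
    (hG : IsWeightedGraph w) (k : ℕ) (hk : 1 ≤ k) (hkN : k ≤ N) :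
    1 / 2 * (1 - cheeger w k) ≤ dualCheeger w k := by
  classical
  obtain ⟨hsymm, hpos, hdiag, hdeg⟩ := hG
  have hK : Nonempty (Fin k) := ⟨⟨0, hk⟩⟩
  -- the dual Cheeger set is bounded above by 1
  have hphibar_le_one : ∀ V₁ V₂ : Finset (Fin N), Disjoint V₁ V₂ →
      (V₁ ∪ V₂).Nonempty → phibar w V₁ V₂ ≤ 1 := by
    intro V₁ V₂ hdisj hne
    have hv : 0 < vol w (V₁ ∪ V₂) := vol_pos hdeg hne
    rw [phibar, div_le_one hv]
    have h1 : Ew w V₁ V₂ ≤ Ew w V₁ univ := Ew_mono_right hpos (subset_univ _) _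
    have h2 : Ew w V₁ V₂ ≤ Ew w V₂ univ := by
      rw [Ew_symm hsymm V₁ V₂]; exact Ew_mono_right hpos (subset_univ _) _
    have h3 : vol w (V₁ ∪ V₂) = Ew w V₁ univ + Ew w V₂ univ := by
      rw [← Ew_univ_right, Ew_union_left hdisj]
    linarith
  have hDbdd : BddAbove { x | ∃ P : Fin k → Finset (Fin N) × Finset (Fin N),
      IsSubBipartition k P ∧ x = ⨅ i, phibar w (P i).1 (P i).2 } := by
    refine ⟨1, fun x hx => ?_⟩
    obtain ⟨P, ⟨hP1, hP2, hP3⟩, rfl⟩ := hx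
    refine ciInf_le_of_le (Finite.bddBelow_range _) (Classical.arbitrary (Fin k)) ?_
    exact hphibar_le_one _ _ (hP1 _) (hP3 _)
  have hCne : { x | ∃ P : Fin k → Finset (Fin N), IsSubpartition k P ∧
      x = ⨆ i, expansion w (P i) }.Nonempty := by
    refine ⟨_, fun i => {Fin.castLE hkN i}, ⟨fun i => ⟨_, mem_singleton_self _⟩, ?_⟩, rfl⟩
    intro i j hij
    rw [Finset.disjoint_singleton]
    exact fun h => hij (Fin.castLE_injective hkN h)
  have key : ∀ s ∈ { x | ∃ P : Fin k → Finset (Fin N), IsSubpartition k P ∧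
      x = ⨆ i, expansion w (P i) }, 1 - 2 * dualCheeger w k ≤ s := by
    rintro s ⟨P, ⟨hPne, hPdisj⟩, rfl⟩
    choose A B hABdisj hABun hcut using fun i => exists_maxcut hsymm hdiag (P i)
    have hQ : IsSubBipartition k (fun i => (A i, B i)) := by
      refine ⟨fun i => hABdisj i, fun i j hij => ?_, fun i => ?_⟩
      · simp only
        rw [hABun i, hABun j]
        exact hPdisj i j hij
      · simp only
        rw [hABun i]
        exact hPne i
    have hmem : (⨅ i, phibar w (A i) (B i)) ∈ { x | ∃ P : Fin k →
        Finset (Fin N) × Finset (Fin N), IsSubBipartition k P ∧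
        x = ⨅ i, phibar w (P i).1 (P i).2 } := ⟨fun i => (A i, B i), hQ, rfl⟩
    have h1 : (⨅ i, phibar w (A i) (B i)) ≤ dualCheeger w k := le_csSup hDbdd hmem
    have h2 : 1 / 2 * (1 - ⨆ i, expansion w (P i)) ≤ ⨅ i, phibar w (A i) (B i) := by
      refine le_ciInf fun i => ?_
      have hexp : expansion w (P i) ≤ ⨆ j, expansion w (P j) :=
        le_ciSup (f := fun j => expansion w (P j)) (Finite.bddAbove_range _) i
      have hvol : 0 < vol w (P i) := vol_pos hdeg (hPne i)
      have hsplit : vol w (P i) = Ew w (P i) (P i) + Ew w (P i) (P i)ᶜ := by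
        rw [← Ew_univ_right, ← Finset.union_compl (P i),
          Ew_union_right disjoint_compl_right]
      have h4 : Ew w (P i) (P i) ≤ 4 * Ew w (A i) (B i) := by
        have e : Ew w (P i) (P i) = Ew w (A i) (A i) + Ew w (A i) (B i)
            + Ew w (B i) (A i) + Ew w (B i) (B i) := by
          rw [← hABun i, Ew_union_left (hABdisj i),
            Ew_union_right (hABdisj i), Ew_union_right (hABdisj i)]
          ring
        have e2 : Ew w (B i) (A i) = Ew w (A i) (B i) := Ew_symm hsymm _ _
        have := hcut i
        linarith
      have hmain : 1 / 2 * (1 - expansion w (P i)) ≤ phibar w (A i) (B i) := by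
        rw [expansion, phibar, hABun i, le_div_iff₀ hvol]
        have e : 1 / 2 * (1 - Ew w (P i) (P i)ᶜ / vol w (P i)) * vol w (P i)
            = (vol w (P i) - Ew w (P i) (P i)ᶜ) / 2 := by
          field_simp
        linarith [hsplit, h4]
      linarith
    linarith
  have hfin : 1 - 2 * dualCheeger w k ≤ cheeger w k := le_csInf hCne key
  linarith

end DualCheeger
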